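/- arXiv:1703.09626 — 4 statements merged into one kernel-verified Lean document; each statement's English description precedes it below -/
import Mathlib

section
/- If Y is a discrete random variable with cumulative distribution function F and probability mass function f, and U is an independent uniform random variable on [0,1], then the randomized quantile residual Z = F(Y) - U·f(Y) is uniformly distributed on [0,1]. -/
/-!
Write `L n = P(Y < n)`, so that `F n = L (n + 1)` and `f n = L (n + 1) - L n`. Conditionally on
`Y = n`, the residual `Z` is uniform on `[L n, L (n + 1)]`, an interval of length `f n`; these
intervals tile `[0, 1]`. Hence `P(Z ≤ t)` is a telescoping series whose sum is the Lebesgue measure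
of `(-∞, t] ∩ [0, 1]`.
-/

open MeasureTheory ProbabilityTheory Set Filter Topology

theorem Iic_inter_Icc_eq {α : Type*} [LinearOrder α] (t a b : α) :
    Iic t ∩ Icc a b = Icc a (min b t) := by
  ext u
  simp only [mem_inter_iff, mem_Iic, mem_Icc, le_min_iff]
  tauto

theorem volume_Iic_inter_Icc (t : ℝ) {a b : ℝ} (hab : a ≤ b) :
    volume (Iic t ∩ Icc a b) = ENNReal.ofReal (min b t - min a t) := by
  rw [Iic_inter_Icc_eq, Real.volume_Icc]
  rcases le_total a t with hat | hta
  · rw [min_eq_left hat]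
  · rw [min_eq_right hta, min_eq_right (hta.trans hab), sub_self, ENNReal.ofReal_zero,
      ENNReal.ofReal_of_nonpos (by linarith)]

theorem ofReal_mul_volume_restrict_Icc_sub_mul_le (t : ℝ) {a b : ℝ} (hab : a ≤ b) :
    ENNReal.ofReal (b - a) * volume.restrict (Icc (0 : ℝ) 1) {u | b - u * (b - a) ≤ t} =
      volume (Iic t ∩ Icc a b) := by
  rcases hab.eq_or_lt with rfl | hab
  · simp [measure_mono_null inter_subset_right Real.volume_singleton]
  have hd : 0 < b - a := sub_pos.2 hab
  have hset : {u : ℝ | b - u * (b - a) ≤ t} ∩ Icc 0 1 = Icc (max ((b - t) / (b - a)) 0) 1 := by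
    ext u
    simp only [mem_inter_iff, mem_ofPred_eq, mem_Icc, max_le_iff, div_le_iff₀ hd]
    constructor <;> rintro ⟨h1, h2⟩
    · exact ⟨⟨by linarith, h2.1⟩, h2.2⟩
    · exact ⟨by linarith, h1.2, h2⟩
  rw [Measure.restrict_apply (measurableSet_le (by fun_prop) (by fun_prop)), hset,
    Real.volume_Icc, ← ENNReal.ofReal_mul hd.le, Iic_inter_Icc_eq, Real.volume_Icc]
  congr 1
  rcases le_total b t with hbt | htb
  · rw [max_eq_right (div_nonpos_of_nonpos_of_nonneg (by linarith) hd.le), min_eq_left hbt]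
    ring
  · rw [max_eq_left (div_nonneg (by linarith) hd.le), min_eq_right htb]
    field_simp
    ring

theorem ENNReal.tsum_ofReal_sub_succ_of_monotone {g : ℕ → ℝ} (hg : Monotone g) {l : ℝ}
    (hl : Tendsto g atTop (𝓝 l)) :
    ∑' n, ENNReal.ofReal (g (n + 1) - g n) = ENNReal.ofReal (l - g 0) := by
  have hnonneg : ∀ n, 0 ≤ g (n + 1) - g n := fun n => sub_nonneg.2 (hg n.le_succ)
  have hsum : HasSum (fun n => g (n + 1) - g n) (l - g 0) := by
    rw [hasSum_iff_tendsto_nat_of_nonneg hnonneg]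
    simpa only [Finset.sum_range_sub] using hl.sub_const (g 0)
  rw [← ENNReal.ofReal_tsum_of_nonneg hnonneg hsum.summable, hsum.tsum_eq]

section

variable {Ω : Type*} [MeasurableSpace Ω] {P : Measure Ω}

theorem measureReal_lt_succ [IsFiniteMeasure P] {Y : Ω → ℕ} (hY : Measurable Y) (n : ℕ) :
    P.real {ω | Y ω < n + 1} = P.real {ω | Y ω < n} + P.real {ω | Y ω = n} := by
  have hset : {ω | Y ω < n + 1} = {ω | Y ω < n} ∪ {ω | Y ω = n} := by
    ext ω
    simp only [mem_union, mem_ofPred_eq]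
    omega
  have hmeas : MeasurableSet {ω | Y ω = n} := hY (measurableSet_singleton n)
  rw [hset, measureReal_union _ hmeas]
  exact disjoint_left.2 fun ω h1 h2 => (ne_of_lt h1) h2

theorem monotone_measureReal_lt [IsFiniteMeasure P] (Y : Ω → ℕ) :
    Monotone fun n : ℕ => P.real {ω | Y ω < n} :=
  fun _ _ hmn => measureReal_mono fun _ h => lt_of_lt_of_le h hmn

theorem tendsto_measureReal_lt [IsProbabilityMeasure P] (Y : Ω → ℕ) :
    Tendsto (fun n : ℕ => P.real {ω | Y ω < n}) atTop (𝓝 1) := by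
  have hmono : Monotone fun n : ℕ => {ω | Y ω < n} := fun _ _ hmn _ h => lt_of_lt_of_le h hmn
  have hunion : (⋃ n : ℕ, {ω | Y ω < n}) = univ :=
    eq_univ_of_forall fun ω => mem_iUnion.2 ⟨Y ω + 1, Nat.lt_succ_self _⟩
  have h := tendsto_measure_iUnion_atTop (μ := P) hmono
  rw [hunion, measure_univ] at h
  simp only [measureReal_def]
  exact (ENNReal.tendsto_toReal ENNReal.one_ne_top).comp h

theorem ProbabilityTheory.IndepFun.measure_preimage_eq_tsum {β γ : Type*} [MeasurableSpace β]
    {Y : Ω → ℕ} {U : Ω → β} (hind : IndepFun Y U P) (hY : Measurable Y) (hU : Measurable U)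
    (g : ℕ → β → γ) {s : Set γ} (hs : ∀ n, MeasurableSet (g n ⁻¹' s)) :
    P ((fun ω => g (Y ω) (U ω)) ⁻¹' s) = ∑' n, P (Y ⁻¹' {n}) * P.map U (g n ⁻¹' s) := by
  have hpre : (fun ω => g (Y ω) (U ω)) ⁻¹' s = ⋃ n, Y ⁻¹' {n} ∩ U ⁻¹' (g n ⁻¹' s) := by
    ext ω
    simp
  have hdisj : Pairwise (Function.onFun Disjoint fun n => Y ⁻¹' {n} ∩ U ⁻¹' (g n ⁻¹' s)) :=
    fun m n hmn => ((pairwise_disjoint_fiber Y) hmn).mono inter_subset_left inter_subset_left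
  rw [hpre, measure_iUnion hdisj fun n => (hY (measurableSet_singleton n)).inter (hU (hs n))]
  congr 1 with n
  rw [hind.measure_inter_preimage_eq_mul _ _ (measurableSet_singleton n) (hs n),
    Measure.map_apply hU (hs n)]

theorem ProbabilityTheory.IndepFun.map_sub_mul_sub_eq_volume_restrict_Icc
    [IsProbabilityMeasure P] {Y : Ω → ℕ} {U : Ω → ℝ} (hind : IndepFun Y U P)
    (hY : Measurable Y) (hU : Measurable U)
    (hUunif : P.map U = volume.restrict (Icc (0 : ℝ) 1)) :
    P.map (fun ω => P.real {ω' | Y ω' < Y ω + 1}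
        - U ω * (P.real {ω' | Y ω' < Y ω + 1} - P.real {ω' | Y ω' < Y ω})) =
      volume.restrict (Icc (0 : ℝ) 1) := by
  set L : ℕ → ℝ := fun n => P.real {ω | Y ω < n} with hL
  have hLmono : Monotone L := monotone_measureReal_lt Y
  have hPY : ∀ n, P (Y ⁻¹' {n}) = ENNReal.ofReal (L (n + 1) - L n) := fun n => by
    show _ = ENNReal.ofReal (P.real {ω | Y ω < n + 1} - P.real {ω | Y ω < n})
    rw [measureReal_lt_succ hY, add_sub_cancel_left, measureReal_def,
      ENNReal.ofReal_toReal (measure_ne_top P _)]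
    rfl
  have hZ : Measurable fun ω => L (Y ω + 1) - U ω * (L (Y ω + 1) - L (Y ω)) := by fun_prop
  refine Measure.ext_of_Iic _ _ fun t => ?_
  rw [Measure.map_apply hZ measurableSet_Iic, Measure.restrict_apply measurableSet_Iic,
    hind.measure_preimage_eq_tsum hY hU (fun n u => L (n + 1) - u * (L (n + 1) - L n))
      fun n => measurableSet_Iic.preimage (by fun_prop), hUunif]
  have hmin : Monotone fun n => min (L n) t := fun _ _ hmn => min_le_min_right t (hLmono hmn)
  calc ∑' n, P (Y ⁻¹' {n}) * volume.restrict (Icc 0 1) {u | L (n + 1) - u * (L (n + 1) - L n) ≤ t}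
      = ∑' n, ENNReal.ofReal (min (L (n + 1)) t - min (L n) t) := by
        congr 1 with n
        rw [hPY, ofReal_mul_volume_restrict_Icc_sub_mul_le t (hLmono n.le_succ),
          volume_Iic_inter_Icc t (hLmono n.le_succ)]
    _ = ENNReal.ofReal (min 1 t - min 0 t) := by
        rw [ENNReal.tsum_ofReal_sub_succ_of_monotone hmin
          ((tendsto_measureReal_lt Y).min tendsto_const_nhds)]
        simp [hL]
    _ = volume (Iic t ∩ Icc 0 1) := (volume_Iic_inter_Icc t zero_le_one).symm

end

/-- Randomized quantile residuals of a discrete random variable are uniform on [0,1]. -/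
theorem rqr_uniform {Ω : Type*} [MeasurableSpace Ω] (P : Measure Ω) [IsProbabilityMeasure P]
    (Y : Ω → ℕ) (U : Ω → ℝ) (hY : Measurable Y) (hU : Measurable U)
    (hind : IndepFun Y U P)
    (hUunif : P.map U = volume.restrict (Set.Icc (0:ℝ) 1))
    (F f : ℕ → ℝ)
    (hF : ∀ y, F y = (P {ω | Y ω ≤ y}).toReal)
    (hf : ∀ y, f y = (P {ω | Y ω = y}).toReal) :
    P.map (fun ω => F (Y ω) - U ω * f (Y ω)) = volume.restrict (Set.Icc (0:ℝ) 1) := by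
  have hFlt : ∀ n, F n = P.real {ω | Y ω < n + 1} := fun n => by
    simp [hF, measureReal_def]
  have hflt : ∀ n, f n = P.real {ω | Y ω < n + 1} - P.real {ω | Y ω < n} := fun n => by
    rw [measureReal_lt_succ hY, add_sub_cancel_left, hf, measureReal_def]
  simp only [hFlt, hflt]
  exact hind.map_sub_mul_sub_eq_volume_restrict_Icc hY hU hUunif
end

section
/- For a discrete random variable Y with cdf F and pmf f, U ~ U[0,1] independent of Y, Z = F(Y) - U·f(Y), and a cutoff a ∈ (0,1), the event {Z ≥ a} equals the event {Y ≥ y*(a)+2} ∪ {Y = y*(a)+1 and U ≤ t_a}, where y*(a) = max{y : F(y) ≤ a} and t_a = (F(y*(a)+1) - a)/f(y*(a)+1), assuming f(y*(a)+1) > 0. -/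
open MeasureTheory ProbabilityTheory Set

/-!
Below the cutoff the transform `Z = F(Y) - U f(Y)` stays strictly under `a`, since `F(y) ≤ a` there
and `U f(Y) > 0` almost surely. From `y*(a) + 2` on, `Z ≥ F(Y) - f(Y) = F(Y - 1) ≥ F(y*(a) + 1) > a`.
Only at `Y = y*(a) + 1` does the outcome depend on `U`, and there `Z ≥ a` unwinds to `U ≤ t_a`.
-/

lemma measure_le_succ_toReal {Ω : Type*} [MeasurableSpace Ω] (P : Measure Ω) [IsFiniteMeasure P]
    {Y : Ω → ℕ} (hY : Measurable Y) (n : ℕ) :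
    (P {ω | Y ω ≤ n + 1}).toReal = (P {ω | Y ω ≤ n}).toReal + (P {ω | Y ω = n + 1}).toReal := by
  have hsplit : {ω | Y ω ≤ n + 1} = {ω | Y ω ≤ n} ∪ {ω | Y ω = n + 1} := by
    ext ω
    simp only [mem_ofPred_eq, mem_union]
    omega
  have hdisj : Disjoint {ω | Y ω ≤ n} {ω | Y ω = n + 1} := by
    rw [disjoint_left]
    intro ω h1 h2
    simp only [mem_ofPred_eq] at h1 h2
    omega
  rw [hsplit, measure_union hdisj (hY (measurableSet_singleton _)),
    ENNReal.toReal_add (measure_ne_top _ _) (measure_ne_top _ _)]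

lemma ae_measure_preimage_singleton_ne_zero {Ω α : Type*} [MeasurableSpace Ω] [MeasurableSpace α]
    [Countable α] [MeasurableSingletonClass α] (P : Measure Ω) {Y : Ω → α} (hY : Measurable Y) :
    ∀ᵐ ω ∂P, P (Y ⁻¹' {Y ω}) ≠ 0 := by
  have hmap : ∀ᵐ y ∂P.map Y, P.map Y {y} ≠ 0 := ae_iff_of_countable.2 fun _ h => h
  filter_upwards [ae_of_ae_map hY.aemeasurable hmap] with ω hω
  rwa [Measure.map_apply hY (measurableSet_singleton _)] at hω

lemma ae_mem_Ioc_of_map_eq_restrict_Icc {Ω : Type*} [MeasurableSpace Ω] {P : Measure Ω}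
    {U : Ω → ℝ} (hU : Measurable U) (hUunif : P.map U = volume.restrict (Icc (0 : ℝ) 1)) :
    ∀ᵐ ω ∂P, U ω ∈ Ioc (0 : ℝ) 1 := by
  refine ae_of_ae_map hU.aemeasurable ?_
  rw [hUunif, Measure.restrict_congr_set Ioc_ae_eq_Icc.symm]
  exact ae_restrict_mem measurableSet_Ioc

section Threshold

variable {F f : ℕ → ℝ} (hf_nonneg : ∀ n, 0 ≤ f n) (hF_succ : ∀ n, F (n + 1) = F n + f (n + 1))
  {a : ℝ} {ys : ℕ} (hys : IsGreatest {y | F y ≤ a} ys)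
include hf_nonneg hF_succ

lemma monotone_of_succ_eq_add : Monotone F :=
  monotone_nat_of_le_succ fun n => by linarith [hF_succ n, hf_nonneg (n + 1)]

include hys

lemma sub_mul_lt_of_le_isGreatest {y : ℕ} (hy : y ≤ ys) {u : ℝ} (hu : 0 < u) (hfy : 0 < f y) :
    F y - u * f y < a := by
  have : F y ≤ a := (monotone_of_succ_eq_add hf_nonneg hF_succ hy).trans hys.1
  nlinarith

lemma lt_sub_mul_of_isGreatest_add_two_le {y : ℕ} (hy : ys + 2 ≤ y) {u : ℝ} (hu : u ≤ 1) :
    a < F y - u * f y := by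
  obtain ⟨k, rfl⟩ : ∃ k, y = k + 1 := ⟨y - 1, by omega⟩
  have hF : a < F (ys + 1) := not_le.1 fun h => by have := hys.2 h; omega
  have hFk : F (ys + 1) ≤ F k := monotone_of_succ_eq_add hf_nonneg hF_succ (by omega)
  nlinarith [hF_succ k, hf_nonneg (k + 1)]

lemma le_sub_mul_iff_of_isGreatest {y : ℕ} {u : ℝ} (hu : u ∈ Ioc 0 1) (hfy : 0 < f y)
    (hfa : 0 < f (ys + 1)) :
    a ≤ F y - u * f y ↔ ys + 2 ≤ y ∨ (y = ys + 1 ∧ u ≤ (F (ys + 1) - a) / f (ys + 1)) := by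
  rcases lt_trichotomy y (ys + 1) with hlt | rfl | hgt
  · have := sub_mul_lt_of_le_isGreatest hf_nonneg hF_succ hys (Nat.le_of_lt_succ hlt) hu.1 hfy
    constructor
    · intro h; linarith
    · rintro (h | ⟨h, -⟩) <;> omega
  · rw [le_div_iff₀ hfa]
    constructor
    · intro h; exact Or.inr ⟨rfl, by linarith⟩
    · rintro (h | ⟨-, h⟩)
      · omega
      · linarith
  · have := lt_sub_mul_of_isGreatest_add_two_le hf_nonneg hF_succ hys hgt hu.2
    exact ⟨fun _ => Or.inl hgt, fun _ => this.le⟩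

end Threshold

theorem rqr_event_decomposition_general {Ω : Type*} [MeasurableSpace Ω]
    (P : Measure Ω) [IsProbabilityMeasure P]
    (Y : Ω → ℕ) (U : Ω → ℝ) (hY : Measurable Y) (hU : Measurable U)
    (hUunif : P.map U = volume.restrict (Set.Icc (0:ℝ) 1))
    (F f : ℕ → ℝ)
    (hF : ∀ y, F y = (P {ω | Y ω ≤ y}).toReal)
    (hf : ∀ y, f y = (P {ω | Y ω = y}).toReal)
    (a : ℝ)
    (ys : ℕ) (hys : IsGreatest {y : ℕ | F y ≤ a} ys)
    (hfa : 0 < f (ys + 1))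
    (ta : ℝ) (hta : ta = (F (ys + 1) - a) / f (ys + 1)) :
    ∀ᵐ ω ∂P, (a ≤ F (Y ω) - U ω * f (Y ω) ↔
      (ys + 2 ≤ Y ω ∨ (Y ω = ys + 1 ∧ U ω ≤ ta))) := by
  have hf_nonneg : ∀ n, 0 ≤ f n := fun n => hf n ▸ ENNReal.toReal_nonneg
  have hF_succ : ∀ n, F (n + 1) = F n + f (n + 1) := fun n => by
    rw [hF, hF, hf, measure_le_succ_toReal P hY]
  filter_upwards [ae_mem_Ioc_of_map_eq_restrict_Icc hU hUunif,
    ae_measure_preimage_singleton_ne_zero P hY] with ω hUω hYω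
  have hfY : 0 < f (Y ω) := by
    rw [hf]
    exact ENNReal.toReal_pos hYω (measure_ne_top _ _)
  rw [hta]
  exact le_sub_mul_iff_of_isGreatest hf_nonneg hF_succ hys hUω hfY hfa

/-- The event {Z ≥ a} equals {Y ≥ y*(a)+2} ∪ {Y = y*(a)+1, U ≤ t_a}. -/
theorem rqr_event_decomposition {Ω : Type*} [MeasurableSpace Ω]
    (P : Measure Ω) [IsProbabilityMeasure P]
    (Y : Ω → ℕ) (U : Ω → ℝ) (hY : Measurable Y) (hU : Measurable U)
    (hind : IndepFun Y U P)
    (hUunif : P.map U = volume.restrict (Set.Icc (0:ℝ) 1))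
    (F f : ℕ → ℝ)
    (hF : ∀ y, F y = (P {ω | Y ω ≤ y}).toReal)
    (hf : ∀ y, f y = (P {ω | Y ω = y}).toReal)
    (a : ℝ) (ha : a ∈ Set.Ioo (0:ℝ) 1)
    (ys : ℕ) (hys : IsGreatest {y : ℕ | F y ≤ a} ys)
    (hfa : 0 < f (ys + 1))
    (ta : ℝ) (hta : ta = (F (ys + 1) - a) / f (ys + 1)) :
    ∀ᵐ ω ∂P, (a ≤ F (Y ω) - U ω * f (Y ω) ↔
      (ys + 2 ≤ Y ω ∨ (Y ω = ys + 1 ∧ U ω ≤ ta))) :=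
  rqr_event_decomposition_general P Y U hY hU hUunif F f hF hf a ys hys hfa ta hta
end

section
/- For a discrete random variable Y with cdf F and pmf f, U ~ U[0,1] independent of Y, Z = F(Y) - U·f(Y), and cutoffs 0 < a < b < 1, the conditional distribution of Y given {a ≤ Z ≤ b} has pmf p(y) = f(y)/Q for T_a ≤ y ≤ T_b, p(y) = f(y)·t_a/Q for y = T_a - 1, p(y) = f(y)·(1 - t_b)/Q for y = T_b + 1, and p(y) = 0 otherwise, where T_a = y*(a)+2, T_b = y*(b), t_c = (F(y*(c)+1) - c)/f(y*(c)+1), and Q = F(T_b) - F(T_a - 1) + f(T_a - 1)·t_a + f(T_b + 1)·(1 - t_b). -/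
open MeasureTheory ProbabilityTheory Set

/-!
Conditionally on `Y = y`, the residual `Z = F y - U * f y` is uniform on `[F y - f y, F y]`, so
`P (E ∩ {Y = y})` is the length of the overlap of this interval with `[a, b]`, namely
`projIcc a b (F y) - projIcc a b (F y - f y)`. These lengths telescope to `P E = b - a`, which is
also the value of `Q`, and locating `a` and `b` among the jumps of `F` gives each overlap.
-/

section Overlap
variable {a b : ℝ} (hab : a ≤ b)

theorem toReal_volume_Icc_inter_Icc {s t : ℝ} (hst : s ≤ t) :
    (volume (Icc s t ∩ Icc a b)).toReal = projIcc a b hab t - projIcc a b hab s := by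
  rw [Icc_inter_Icc, Real.volume_Icc, ENNReal.toReal_ofReal', coe_projIcc, coe_projIcc]
  simp only [max_def, min_def]
  split_ifs <;> linarith

theorem ofReal_mul_volume_preimage_affine {c d : ℝ} (hd : 0 < d) :
    ENNReal.ofReal d * volume ((fun u => c - u * d) ⁻¹' Icc a b ∩ Icc 0 1) =
      volume (Icc (c - d) c ∩ Icc a b) := by
  have hpre : (fun u => c - u * d) ⁻¹' Icc a b = Icc ((c - b) / d) ((c - a) / d) := by
    ext u
    simp only [mem_preimage, mem_Icc, div_le_iff₀ hd, le_div_iff₀ hd]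
    constructor <;> rintro ⟨h1, h2⟩ <;> constructor <;> linarith
  rw [hpre, Icc_inter_Icc, Icc_inter_Icc, Real.volume_Icc, Real.volume_Icc,
    ← ENNReal.ofReal_mul hd.le, mul_sub, mul_min_of_nonneg _ _ hd.le, mul_max_of_nonneg _ _ hd.le,
    mul_div_cancel₀ _ hd.ne', mul_div_cancel₀ _ hd.ne', mul_one, mul_zero]
  congr 1
  simp only [max_def, min_def]
  split_ifs <;> linarith

end Overlap

section Telescoping
variable {F f : ℕ → ℝ} {a b : ℝ} (hab : a ≤ b)

theorem sum_range_projIcc_sub_projIcc (hstep : ∀ k, F (k + 1) = F k + f (k + 1)) (n : ℕ) :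
    ∑ y ∈ Finset.range n, ((projIcc a b hab (F y) : ℝ) - projIcc a b hab (F y - f y)) =
      projIcc a b hab (F n - f n) - projIcc a b hab (F 0 - f 0) := by
  rw [← Finset.sum_range_sub (fun y => (projIcc a b hab (F y - f y) : ℝ)) n]
  simp only [hstep, add_sub_cancel_right]

theorem projIcc_sub_projIcc_eq_ite (hf0 : ∀ y, 0 ≤ f y)
    (hstep : ∀ k, F (k + 1) = F k + f (k + 1)) {m n : ℕ} (hm : F m ≤ a) (hm' : a < F (m + 1))
    (hn : F n ≤ b) (hn' : b < F (n + 1)) (hmn : m + 2 ≤ n) (y : ℕ) :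
    (projIcc a b hab (F y) : ℝ) - projIcc a b hab (F y - f y) =
      if m + 2 ≤ y ∧ y ≤ n then f y
      else if y = m + 1 then F (m + 1) - a
      else if y = n + 1 then b - F n
      else 0 := by
  have hF : Monotone F := monotone_nat_of_le_succ fun k => by linarith [hstep k, hf0 (k + 1)]
  have hprev : ∀ k, F (k + 1) - f (k + 1) = F k := fun k => by rw [hstep]; ring
  split_ifs with hmid hlow hhigh
  · obtain ⟨k, rfl⟩ : ∃ k, y = k + 1 := ⟨y - 1, by omega⟩
    have hk : a ≤ F k := hm'.le.trans (hF (by omega))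
    have hk' : F (k + 1) ≤ b := (hF hmid.2).trans hn
    rw [hprev, projIcc_of_mem hab ⟨hk.trans (hF k.le_succ), hk'⟩,
      projIcc_of_mem hab ⟨hk, (hF k.le_succ).trans hk'⟩]
    linarith [hstep k]
  · subst hlow
    rw [hprev, projIcc_of_mem hab ⟨hm'.le, (hF (by omega)).trans hn⟩, projIcc_of_le_left hab hm]
  · subst hhigh
    rw [hprev, projIcc_of_right_le hab hn'.le,
      projIcc_of_mem hab ⟨hm'.le.trans (hF (by omega)), hn⟩]
  · rcases (show y ≤ m ∨ n + 2 ≤ y by omega) with hy | hy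
    · have hy' : F y ≤ a := (hF hy).trans hm
      rw [projIcc_of_le_left hab hy', projIcc_of_le_left hab (by linarith [hf0 y]), sub_self]
    · obtain ⟨k, rfl⟩ : ∃ k, y = k + 1 := ⟨y - 1, by omega⟩
      have hk : b ≤ F k := hn'.le.trans (hF (by omega))
      rw [hprev, projIcc_of_right_le hab hk, projIcc_of_right_le hab (hk.trans (hF k.le_succ)),
        sub_self]

end Telescoping

section Fibers
variable {Ω : Type*} [MeasurableSpace Ω] {P : Measure Ω} {Y : Ω → ℕ}

theorem toReal_measure_le_succ [IsFiniteMeasure P] (hY : Measurable Y) (k : ℕ) :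
    (P {ω | Y ω ≤ k + 1}).toReal =
      (P {ω | Y ω ≤ k}).toReal + (P {ω | Y ω = k + 1}).toReal := by
  have hunion : {ω | Y ω ≤ k + 1} = {ω | Y ω ≤ k} ∪ {ω | Y ω = k + 1} := by
    ext ω; simp only [mem_ofPred_eq, mem_union]; omega
  rw [hunion, ← ENNReal.toReal_add (measure_ne_top _ _) (measure_ne_top _ _)]
  refine congrArg ENNReal.toReal (measure_union (disjoint_left.2 fun ω h1 h2 => ?_)
    (hY (measurableSet_singleton (k + 1))))
  simp only [mem_ofPred_eq] at h1 h2
  omega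

theorem measure_eq_sum_range_inter_fiber (hY : Measurable Y) {S : Set Ω} {n : ℕ}
    (h : ∀ y, n ≤ y → P (S ∩ {ω | Y ω = y}) = 0) :
    P S = ∑ y ∈ Finset.range n, P (S ∩ {ω | Y ω = y}) := by
  calc P S = P.restrict S (⋃ y, {ω | Y ω = y}) := by
        rw [iUnion_eq_univ_iff.2 fun ω => ⟨Y ω, rfl⟩, Measure.restrict_apply_univ]
    _ = ∑' y, P (S ∩ {ω | Y ω = y}) := by
        refine (measure_iUnion (pairwise_disjoint_fiber Y)
          fun y => hY (measurableSet_singleton y)).trans ?_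
        simp only [Measure.restrict_apply (hY (measurableSet_singleton _)), inter_comm]
        rfl
    _ = _ := tsum_eq_sum fun y hy => h y (by simpa using hy)

variable {U : Ω → ℝ}

theorem measure_rqr_inter_fiber_eq_volume [IsFiniteMeasure P] (hU : Measurable U)
    (hind : IndepFun Y U P) (hUunif : P.map U = volume.restrict (Icc (0 : ℝ) 1))
    (F f : ℕ → ℝ) (a b : ℝ) {y : ℕ} (hfy : f y = (P {ω | Y ω = y}).toReal) :
    P ({ω | a ≤ F (Y ω) - U ω * f (Y ω) ∧ F (Y ω) - U ω * f (Y ω) ≤ b} ∩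
        {ω | Y ω = y}) =
      volume (Icc (F y - f y) (F y) ∩ Icc a b) := by
  have hset : {ω | a ≤ F (Y ω) - U ω * f (Y ω) ∧ F (Y ω) - U ω * f (Y ω) ≤ b} ∩
      {ω | Y ω = y} = Y ⁻¹' {y} ∩ U ⁻¹' ((fun u => F y - u * f y) ⁻¹' Icc a b) := by
    ext ω
    simp only [mem_inter_iff, mem_ofPred_eq, mem_preimage, mem_singleton_iff, mem_Icc]
    constructor
    · rintro ⟨h, rfl⟩; exact ⟨rfl, h⟩
    · rintro ⟨rfl, h⟩; exact ⟨h, rfl⟩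
  have hA : MeasurableSet ((fun u => F y - u * f y) ⁻¹' Icc a b) :=
    measurableSet_Icc.preimage (by fun_prop)
  rw [hset, hind.measure_inter_preimage_eq_mul _ _ (measurableSet_singleton y) hA,
    ← Measure.map_apply hU hA, hUunif, Measure.restrict_apply hA]
  rcases (hfy ▸ ENNReal.toReal_nonneg : 0 ≤ f y).eq_or_lt with hzero | hpos
  · have hPy : P (Y ⁻¹' {y}) = 0 :=
      ((ENNReal.toReal_eq_zero_iff _).1 (hzero.trans hfy).symm).resolve_right (measure_ne_top _ _)
    have hnull : volume (Icc (F y - f y) (F y) ∩ Icc a b) = 0 :=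
      measure_mono_null inter_subset_left (by simp [← hzero])
    rw [hPy, hnull, zero_mul]
  · rw [← ofReal_mul_volume_preimage_affine hpos]
    congr 1
    rw [hfy, ENNReal.ofReal_toReal (measure_ne_top _ _)]
    rfl

theorem toReal_measure_eq_projIcc_sub_projIcc [IsFiniteMeasure P] (hY : Measurable Y)
    {S : Set Ω} {F f : ℕ → ℝ} {a b : ℝ} (hab : a ≤ b)
    (hstep : ∀ k, F (k + 1) = F k + f (k + 1))
    (hfib : ∀ y, (P (S ∩ {ω | Y ω = y})).toReal =
      (projIcc a b hab (F y) : ℝ) - projIcc a b hab (F y - f y))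
    {n : ℕ}
    (htail : ∀ y, n ≤ y → (projIcc a b hab (F y) : ℝ) - projIcc a b hab (F y - f y) = 0) :
    (P S).toReal = projIcc a b hab (F n - f n) - projIcc a b hab (F 0 - f 0) := by
  rw [measure_eq_sum_range_inter_fiber hY fun y hy => (measureReal_eq_zero_iff).1
      (by rw [measureReal_def, hfib, htail y hy]),
    ENNReal.toReal_sum fun _ _ => measure_ne_top _ _]
  simp only [hfib]
  exact sum_range_projIcc_sub_projIcc hab hstep n

end Fibers

theorem conditional_pmf_given_rqr_general {Ω : Type*} [MeasurableSpace Ω]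
    (P : Measure Ω) [IsProbabilityMeasure P]
    (Y : Ω → ℕ) (U : Ω → ℝ) (hY : Measurable Y) (hU : Measurable U)
    (hind : IndepFun Y U P)
    (hUunif : P.map U = volume.restrict (Set.Icc (0:ℝ) 1))
    (F f : ℕ → ℝ)
    (hF : ∀ y, F y = (P {ω | Y ω ≤ y}).toReal)
    (hf : ∀ y, f y = (P {ω | Y ω = y}).toReal)
    (a b : ℝ) (ha : 0 < a) (hab : a < b)
    (ysa ysb : ℕ)
    (hysa : IsGreatest {y : ℕ | F y ≤ a} ysa)
    (hysb : IsGreatest {y : ℕ | F y ≤ b} ysb)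
    (hfa : 0 < f (ysa + 1)) (hfb : 0 < f (ysb + 1))
    (Ta Tb : ℕ) (hTa : Ta = ysa + 2) (hTb : Tb = ysb) (hTab : Ta ≤ Tb)
    (ta tb Q : ℝ)
    (hta : ta = (F (ysa + 1) - a) / f (ysa + 1))
    (htb : tb = (F (ysb + 1) - b) / f (ysb + 1))
    (hQ : Q = F Tb - F (ysa + 1) + f (ysa + 1) * ta + f (Tb + 1) * (1 - tb))
    (E : Set Ω)
    (hE : E = {ω | a ≤ F (Y ω) - U ω * f (Y ω) ∧ F (Y ω) - U ω * f (Y ω) ≤ b}) :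
    ∀ y : ℕ, (P (E ∩ {ω | Y ω = y})).toReal / (P E).toReal =
      if Ta ≤ y ∧ y ≤ Tb then f y / Q
      else if y = ysa + 1 then f y * ta / Q
      else if y = Tb + 1 then f y * (1 - tb) / Q
      else 0 := by
  subst hTa hTb
  have hf0 : ∀ y, 0 ≤ f y := fun y => hf y ▸ ENNReal.toReal_nonneg
  have hstep : ∀ k, F (k + 1) = F k + f (k + 1) := fun k => by
    rw [hF, hF, hf, toReal_measure_le_succ hY]
  have hF0 : F 0 - f 0 = 0 := by rw [hF, hf, sub_eq_zero]; simp only [Nat.le_zero]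
  have haF : a < F (ysa + 1) := not_le.1 fun h => (hysa.2 h).not_gt ysa.lt_succ_self
  have hbF : b < F (Tb + 1) := not_le.1 fun h => (hysb.2 h).not_gt Tb.lt_succ_self
  have hfta : f (ysa + 1) * ta = F (ysa + 1) - a := by rw [hta, mul_div_cancel₀ _ hfa.ne']
  have hftb : f (Tb + 1) * (1 - tb) = b - F Tb := by
    rw [htb, mul_sub, mul_one, mul_div_cancel₀ _ hfb.ne', hstep]; ring
  have hterm : ∀ y, (P (E ∩ {ω | Y ω = y})).toReal =
      (projIcc a b hab.le (F y) : ℝ) - projIcc a b hab.le (F y - f y) := fun y => by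
    rw [hE, measure_rqr_inter_fiber_eq_volume hU hind hUunif F f a b (hf y),
      toReal_volume_Icc_inter_Icc hab.le (by linarith [hf0 y])]
  have hvalue := projIcc_sub_projIcc_eq_ite hab.le hf0 hstep hysa.1 haF hysb.1 hbF hTab
  have hPE : (P E).toReal = b - a := by
    rw [toReal_measure_eq_projIcc_sub_projIcc hY hab.le hstep hterm (n := Tb + 2)
        fun y hy => by rw [hvalue]; split_ifs <;> first | rfl | omega,
      hstep, add_sub_cancel_right, hF0, projIcc_of_right_le hab.le hbF.le,
      projIcc_of_le_left hab.le ha.le]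
  have hQb : Q = b - a := by rw [hQ, hfta, hftb]; ring
  intro y
  rw [hterm, hvalue, hPE, hQb]
  split_ifs with hmid hlow hhigh
  · rfl
  · rw [hlow, hfta]
  · rw [hhigh, hftb]
  · rw [zero_div]

/-- Conditional pmf of Y given a ≤ Z ≤ b, where Z is the randomized quantile residual. -/
theorem conditional_pmf_given_rqr {Ω : Type*} [MeasurableSpace Ω]
    (P : Measure Ω) [IsProbabilityMeasure P]
    (Y : Ω → ℕ) (U : Ω → ℝ) (hY : Measurable Y) (hU : Measurable U)
    (hind : IndepFun Y U P)
    (hUunif : P.map U = volume.restrict (Set.Icc (0:ℝ) 1))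
    (F f : ℕ → ℝ)
    (hF : ∀ y, F y = (P {ω | Y ω ≤ y}).toReal)
    (hf : ∀ y, f y = (P {ω | Y ω = y}).toReal)
    (a b : ℝ) (ha : 0 < a) (hab : a < b) (hb : b < 1)
    (ysa ysb : ℕ)
    (hysa : IsGreatest {y : ℕ | F y ≤ a} ysa)
    (hysb : IsGreatest {y : ℕ | F y ≤ b} ysb)
    (hfa : 0 < f (ysa + 1)) (hfb : 0 < f (ysb + 1))
    (Ta Tb : ℕ) (hTa : Ta = ysa + 2) (hTb : Tb = ysb) (hTab : Ta ≤ Tb)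
    (ta tb Q : ℝ)
    (hta : ta = (F (ysa + 1) - a) / f (ysa + 1))
    (htb : tb = (F (ysb + 1) - b) / f (ysb + 1))
    (hQ : Q = F Tb - F (ysa + 1) + f (ysa + 1) * ta + f (Tb + 1) * (1 - tb))
    (hQpos : 0 < Q)
    (E : Set Ω)
    (hE : E = {ω | a ≤ F (Y ω) - U ω * f (Y ω) ∧ F (Y ω) - U ω * f (Y ω) ≤ b}) :
    ∀ y : ℕ, (P (E ∩ {ω | Y ω = y})).toReal / (P E).toReal =
      if Ta ≤ y ∧ y ≤ Tb then f y / Q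
      else if y = ysa + 1 then f y * ta / Q
      else if y = Tb + 1 then f y * (1 - tb) / Q
      else 0 :=
  conditional_pmf_given_rqr_general P Y U hY hU hind hUunif F f hF hf a b ha hab ysa ysb hysa hysb
    hfa hfb Ta Tb hTa hTb hTab ta tb Q hta htb hQ E hE
end

section
/- Suppose {z_i} are random variables with empirical cdf F_n satisfying |F_n(v) - F_{vn}(v)| controls: F_n(v) ≤ v + n^{-1/2}G_n and F_n(v) ≥ v - n^{-1/2}G_n* for all v, where G_n and G_n* are random variables bounded in probability. Fix ζ₁ ∈ (0,1), and define ã = inf{a : sup_{v ≤ ζ₁} (H_{n,a}(v) - v) ≤ 0} where H_{n,a}(v) = max(F_n(v) - F_n(a), 0)/(1 - F_n(a)). Then a ≥ n^{-1/2}(G_n/(1-ζ₁) + G_n*) implies a ∈ {a : sup_{v ≤ ζ₁}(H_{n,a}(v) - v) ≤ 0}, and consequently ã ≤ n^{-1/2}(G_n/(1-ζ₁) + G_n*). -/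
/-!
Fix `a ≥ n^{-1/2}(G/(1-ζ) + G*)` and `v ≤ ζ`. The lower bound gives `F a ≥ a - n^{-1/2}G* ≥
n^{-1/2}G/(1-ζ)`, hence `n^{-1/2}G ≤ (1-ζ) F a ≤ (1-v) F a`; combined with the upper bound
`F v ≤ v + n^{-1/2}G` this is exactly `F v - F a ≤ v (1 - F a)`, i.e. `H_{n,a}(v) ≤ v`.
So every such `a` is admissible, in particular the threshold itself, which bounds the infimum.
-/

open Set

/-- The paper's `H_{n,a}(v)`, with `F = F_n`. -/
noncomputable def leftTruncate (F : ℝ → ℝ) (a v : ℝ) : ℝ :=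
  max (F v - F a) 0 / (1 - F a)

-- When `F a = 1` the division returns `0`, so the bound still holds.
theorem leftTruncate_le {F : ℝ → ℝ} {a v ζ g : ℝ} (hζ : ζ < 1) (hv : v ∈ Icc 0 ζ)
    (hFa : F a ∈ Icc 0 1) (hFv : F v ≤ v + g) (hgFa : g / (1 - ζ) ≤ F a) :
    leftTruncate F a v ≤ v := by
  have hg : g ≤ (1 - v) * F a :=
    calc g = (1 - ζ) * (g / (1 - ζ)) := by field_simp [(sub_pos.2 hζ).ne']
      _ ≤ (1 - ζ) * F a := by gcongr
      _ ≤ (1 - v) * F a := by gcongr; exacts [hFa.1, hv.2]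
  refine div_le_of_le_mul₀ (sub_nonneg.2 hFa.2) hv.1 (max_le ?_ ?_)
  · linarith
  · exact mul_nonneg hv.1 (sub_nonneg.2 hFa.2)

theorem leftTruncate_le_of_threshold_le {F : ℝ → ℝ} {a ζ g g' : ℝ} (hζ : ζ < 1)
    (hFa : F a ∈ Icc 0 1) (hub : ∀ v ∈ Icc (0 : ℝ) 1, F v ≤ v + g)
    (hlb : ∀ v ∈ Icc (0 : ℝ) 1, v - g' ≤ F v) (ha : a ∈ Icc 0 1) (hga : g / (1 - ζ) + g' ≤ a) :
    ∀ v ∈ Icc 0 ζ, leftTruncate F a v ≤ v := fun v hv ↦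
  leftTruncate_le hζ hv hFa (hub v ⟨hv.1, hv.2.trans hζ.le⟩) (by linarith [hlb a ha])

theorem Real.sInf_le_of_mem_of_nonneg {s : Set ℝ} {c : ℝ} (hc : c ∈ s) (hc0 : 0 ≤ c) :
    sInf s ≤ c := by
  by_cases hs : BddBelow s
  · exact csInf_le hs hc
  · exact (Real.sInf_of_not_bddBelow hs).trans_le hc0

theorem adaptive_lower_cutoff_bound_general (n : ℕ)
    (Fn : ℝ → ℝ)
    (hrange : ∀ v, Fn v ∈ Set.Icc (0:ℝ) 1)
    (G G' : ℝ) (hG : 0 ≤ G) (hG' : 0 ≤ G')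
    (hub : ∀ v ∈ Set.Icc (0:ℝ) 1, Fn v ≤ v + G / Real.sqrt n)
    (hlb : ∀ v ∈ Set.Icc (0:ℝ) 1, v - G' / Real.sqrt n ≤ Fn v)
    (ζ : ℝ) (hζ : ζ ∈ Set.Ioo (0:ℝ) 1)
    (hbound : (G / (1 - ζ) + G') / Real.sqrt n ≤ 1)
    (A : Set ℝ)
    (hA : A = {a : ℝ | ∀ v ∈ Set.Icc 0 ζ, max (Fn v - Fn a) 0 / (1 - Fn a) ≤ v}) :
    (∀ a ∈ Set.Icc (0:ℝ) 1, (G / (1 - ζ) + G') / Real.sqrt n ≤ a → a ∈ A) ∧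
      sInf A ≤ (G / (1 - ζ) + G') / Real.sqrt n := by
  have hthreshold : (G / (1 - ζ) + G') / √n = G / √n / (1 - ζ) + G' / √n := by ring
  have hmem : ∀ a ∈ Icc (0 : ℝ) 1, (G / (1 - ζ) + G') / √n ≤ a → a ∈ A := by
    intro a ha hca
    subst hA
    exact leftTruncate_le_of_threshold_le hζ.2 (hrange a) hub hlb ha (hthreshold ▸ hca)
  have hthreshold_nonneg : 0 ≤ (G / (1 - ζ) + G') / √n := by
    have := sub_pos.2 hζ.2
    positivity
  exact ⟨hmem, Real.sInf_le_of_mem_of_nonneg (hmem _ ⟨hthreshold_nonneg, hbound⟩ le_rfl)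
    hthreshold_nonneg⟩

/-- The adaptive lower cutoff ã is bounded by n^{-1/2}(G/(1-ζ₁) + G*). -/
theorem adaptive_lower_cutoff_bound (n : ℕ) (hn : 0 < n)
    (Fn : ℝ → ℝ) (hmono : Monotone Fn)
    (hrange : ∀ v, Fn v ∈ Set.Icc (0:ℝ) 1)
    (G G' : ℝ) (hG : 0 ≤ G) (hG' : 0 ≤ G')
    (hub : ∀ v ∈ Set.Icc (0:ℝ) 1, Fn v ≤ v + G / Real.sqrt n)
    (hlb : ∀ v ∈ Set.Icc (0:ℝ) 1, v - G' / Real.sqrt n ≤ Fn v)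
    (ζ : ℝ) (hζ : ζ ∈ Set.Ioo (0:ℝ) 1)
    (hF1 : ∀ a, Fn a < 1)
    (hbound : (G / (1 - ζ) + G') / Real.sqrt n ≤ 1)
    (A : Set ℝ)
    (hA : A = {a : ℝ | ∀ v ∈ Set.Icc 0 ζ, max (Fn v - Fn a) 0 / (1 - Fn a) ≤ v}) :
    (∀ a ∈ Set.Icc (0:ℝ) 1, (G / (1 - ζ) + G') / Real.sqrt n ≤ a → a ∈ A) ∧
      sInf A ≤ (G / (1 - ζ) + G') / Real.sqrt n :=
  adaptive_lower_cutoff_bound_general n Fn hrange G G' hG hG' hub hlb ζ hζ hbound A hA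
end
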